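/- arXiv:2603.06553 — 3 statements merged into one kernel-verified Lean document; each statement's English description precedes it below -/
import Mathlib

section
/- Let E be an order dense sublattice of B(K) and let L be the set of all bounded functions on K expressible as a difference of two pointwise increasing limits of sequences from E. If f, g ∈ B(K), g ∈ L, and {x : f(x) ≠ g(x)} is at most countable, then f ∈ L. -/
open Filter
open scoped Classical

/-- f is a bounded real function (member of B(K)). -/
def Bdd {K : Type*} (f : K → ℝ) : Prop := ∃ C : ℝ, ∀ x, |f x| ≤ C

/-- f is the pointwise limit of an increasing sequence from E, within B(K). -/
def UpLim {K : Type*} (E : Set (K → ℝ)) (f : K → ℝ) : Prop :=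
  Bdd f ∧ ∃ u : ℕ → K → ℝ, (∀ n, u n ∈ E) ∧ Monotone u ∧
    ∀ x, Tendsto (fun n => u n x) atTop (nhds (f x))

theorem bdd_add' {K : Type*} {f g : K → ℝ} (hf : Bdd f) (hg : Bdd g) : Bdd (f + g) := by
  obtain ⟨C, hC⟩ := hf; obtain ⟨D, hD⟩ := hg
  exact ⟨C + D, fun x => (abs_add_le _ _).trans (add_le_add (hC x) (hD x))⟩

theorem uplim_add' {K : Type*} {E : Set (K → ℝ)}
    (hadd : ∀ f ∈ E, ∀ g ∈ E, f + g ∈ E) {f g : K → ℝ}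
    (hf : UpLim E f) (hg : UpLim E g) : UpLim E (f + g) := by
  obtain ⟨hbf, u, huE, humon, hulim⟩ := hf
  obtain ⟨hbg, v, hvE, hvmon, hvlim⟩ := hg
  refine ⟨bdd_add' hbf hbg, fun n => u n + v n, fun n => hadd _ (huE n) _ (hvE n),
    fun a b hab => add_le_add (humon hab) (hvmon hab), fun x => ?_⟩
  exact (hulim x).add (hvlim x)

theorem indic_mem' {K : Type*} {E : Set (K → ℝ)}
    (hsm : ∀ (c : ℝ), ∀ f ∈ E, c • f ∈ E)
    (hdense : ∀ f : K → ℝ, Bdd f → 0 ≤ f → f ≠ 0 → ∃ g ∈ E, 0 ≤ g ∧ g ≠ 0 ∧ g ≤ f)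
    (x₀ : K) {c : ℝ} (hc : 0 < c) :
    (fun y => if y = x₀ then c else 0) ∈ E := by
  obtain ⟨g, hgE, hg0, hgne, hgle⟩ := hdense (fun y => if y = x₀ then c else 0)
    ⟨c, fun y => by dsimp only; split <;> simp [abs_of_pos hc, hc.le]⟩
    (fun y => by dsimp only; split <;> simp [hc.le])
    (by intro h; have := congrFun h x₀; simp at this; exact hc.ne' this)
  have gzero : ∀ y, y ≠ x₀ → g y = 0 := by
    intro y hy
    have h1 := hgle y
    simp only [hy, if_false] at h1
    exact le_antisymm h1 (hg0 y)
  have gx0pos : 0 < g x₀ := by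
    rcases (hg0 x₀).lt_or_eq with h | h
    · exact h
    · exfalso; apply hgne; funext y
      by_cases hy : y = x₀
      · simp [hy, ← h]
      · simp [gzero y hy]
  have : (c / g x₀) • g = (fun y => if y = x₀ then c else 0) := by
    funext y
    by_cases hy : y = x₀
    · simp [hy, div_mul_cancel₀ _ gx0pos.ne']
    · simp [hy, gzero y hy]
  exact this ▸ hsm (c / g x₀) g hgE

theorem supported_uplim' {K : Type*} {E : Set (K → ℝ)}
    (hsm : ∀ (c : ℝ), ∀ f ∈ E, c • f ∈ E)
    (hsupcl : ∀ f ∈ E, ∀ g ∈ E, f ⊔ g ∈ E)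
    (hdense : ∀ f : K → ℝ, Bdd f → 0 ≤ f → f ≠ 0 → ∃ g ∈ E, 0 ≤ g ∧ g ≠ 0 ∧ g ≤ f)
    (h : K → ℝ) (hb : Bdd h) (hpos : ∀ y, 0 ≤ h y)
    (x : ℕ → K) (hsupp : ∀ y, h y ≠ 0 → ∃ n, x n = y) :
    UpLim E h := by
  have hzeroE : (0 : K → ℝ) ∈ E := by
    have h1 := indic_mem' hsm hdense (x 0) (c := 1) one_pos
    have := hsm 0 _ h1
    simpa using this
  set e : ℕ → K → ℝ := fun k y => if y = x k then h (x k) else 0 with he_def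
  have heE : ∀ k, e k ∈ E := by
    intro k
    rcases (hpos (x k)).lt_or_eq with hk | hk
    · exact indic_mem' hsm hdense (x k) hk
    · have : e k = 0 := by funext y; simp [he_def, ← hk]
      rw [this]; exact hzeroE
  set u : ℕ → K → ℝ := fun n => Nat.rec (e 0) (fun k acc => acc ⊔ e (k + 1)) n with hu_def
  have huE : ∀ n, u n ∈ E := by
    intro n; induction n with
    | zero => exact heE 0
    | succ n ih => exact hsupcl _ ih _ (heE (n + 1))
  have hmono : ∀ n, u n ≤ u (n + 1) := fun n => le_sup_left
  have hle_e : ∀ k n, k ≤ n → e k ≤ u n := by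
    intro k n
    induction n with
    | zero => intro hk; interval_cases k; exact le_refl _
    | succ n ih =>
      intro hk
      have hr : u (n + 1) = u n ⊔ e (n + 1) := rfl
      rcases hk.lt_or_eq with h' | h'
      · exact le_trans (ih (Nat.lt_succ_iff.mp h')) (hr ▸ le_sup_left)
      · subst h'; exact hr ▸ le_sup_right
  have he_le : ∀ k y, e k y ≤ h y := by
    intro k y
    show (if y = x k then h (x k) else 0) ≤ h y
    split
    · next hy => rw [hy]
    · exact hpos y
  have hub : ∀ n y, u n y ≤ h y := by
    intro n; induction n with
    | zero => exact he_le 0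
    | succ n ih =>
      intro y
      have : u (n + 1) y = u n y ⊔ e (n + 1) y := rfl
      rw [this]
      exact sup_le (ih y) (he_le (n + 1) y)
  have hlb : ∀ n y, 0 ≤ u n y := by
    intro n y
    have h1 : e 0 y ≤ u n y := hle_e 0 n (Nat.zero_le n) y
    refine le_trans ?_ h1
    show (0:ℝ) ≤ if y = x 0 then h (x 0) else 0
    split
    · exact hpos _
    · exact le_refl _
  refine ⟨hb, u, huE, monotone_nat_of_le_succ hmono, fun y => ?_⟩
  by_cases hy : h y = 0
  · have : ∀ n, u n y = h y := fun n =>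
      le_antisymm (hy ▸ hub n y) (hy ▸ hlb n y)
    exact tendsto_const_nhds.congr fun n => (this n).symm
  · obtain ⟨k, hk⟩ := hsupp y hy
    have key : ∀ n, k ≤ n → u n y = h y := by
      intro n hn
      refine le_antisymm (hub n y) ?_
      have h1 : e k y ≤ u n y := hle_e k n hn y
      have h2 : e k y = h y := by
        show (if y = x k then h (x k) else 0) = h y
        rw [if_pos hk.symm, hk]
      exact h2 ▸ h1
    exact tendsto_const_nhds.congr' (eventually_atTop.2 ⟨k, fun n hn => (key n hn).symm⟩)

/-- Let E be an order dense sublattice of B(K) and L the set of bounded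
functions expressible as a difference of two pointwise increasing limits of sequences
from E. If f, g ∈ B(K), g ∈ L and [f ≠ g] is at most countable, then f ∈ L. -/
theorem stmt8 {K : Type*} (E : Set (K → ℝ))
    (hEB : E ⊆ {f | Bdd f})
    (hadd : ∀ f ∈ E, ∀ g ∈ E, f + g ∈ E)
    (hsm : ∀ (c : ℝ), ∀ f ∈ E, c • f ∈ E)
    (hsupcl : ∀ f ∈ E, ∀ g ∈ E, f ⊔ g ∈ E)
    (hdense : ∀ f : K → ℝ, Bdd f → 0 ≤ f → f ≠ 0 → ∃ g ∈ E, 0 ≤ g ∧ g ≠ 0 ∧ g ≤ f)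
    (L : Set (K → ℝ))
    (hL : L = {f | Bdd f ∧ ∃ u v : K → ℝ, UpLim E u ∧ UpLim E v ∧ f = u - v})
    (f g : K → ℝ) (hf : Bdd f) (hgB : Bdd g) (hg : g ∈ L)
    (hfg : {x | f x ≠ g x}.Countable) :
    f ∈ L := by
  rw [hL] at hg ⊢
  obtain ⟨hgBdd, u0, v0, hu0, hv0, hgeq⟩ := hg
  by_cases hall : ∀ y, f y = g y
  · have hfgeq : f = g := funext hall
    exact ⟨hf, u0, v0, hu0, hv0, hfgeq ▸ hgeq⟩
  · push_neg at hall
    obtain ⟨y0, hy0⟩ := hall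
    obtain ⟨x, hx⟩ := hfg.exists_eq_range ⟨y0, hy0⟩
    obtain ⟨Cf, hCf⟩ := id hf
    obtain ⟨Cg, hCg⟩ := id hgB
    have hbd : ∀ y, |f y - g y| ≤ Cf + Cg := fun y =>
      (abs_sub _ _).trans (add_le_add (hCf y) (hCg y))
    have habs : ∀ a b : ℝ, |a| ≤ b → |max a 0| ≤ b := by
      intro a b hab
      rw [abs_of_nonneg (le_max_right a 0)]
      exact max_le ((le_abs_self a).trans hab) ((abs_nonneg a).trans hab)
    have hpB : Bdd (fun y => max (f y - g y) 0) :=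
      ⟨Cf + Cg, fun y => habs _ _ (hbd y)⟩
    have hmB : Bdd (fun y => max (g y - f y) 0) :=
      ⟨Cf + Cg, fun y => habs _ _ (by rw [abs_sub_comm]; exact hbd y)⟩
    have hmem : ∀ y : K, f y ≠ g y → ∃ n, x n = y := by
      intro y hy
      have : y ∈ Set.range x := hx ▸ hy
      exact this
    have hpU : UpLim E (fun y => max (f y - g y) 0) := by
      refine supported_uplim' hsm hsupcl hdense _ hpB (fun y => le_max_right _ _) x ?_
      intro y hy
      refine hmem y fun hc => hy ?_
      simp only [hc, sub_self, max_self]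
    have hmU : UpLim E (fun y => max (g y - f y) 0) := by
      refine supported_uplim' hsm hsupcl hdense _ hmB (fun y => le_max_right _ _) x ?_
      intro y hy
      refine hmem y fun hc => hy ?_
      simp only [hc, sub_self, max_self]
    refine ⟨hf, u0 + (fun y => max (f y - g y) 0), v0 + (fun y => max (g y - f y) 0),
      uplim_add' hadd hu0 hpU, uplim_add' hadd hv0 hmU, ?_⟩
    funext y
    have hgy : g y = u0 y - v0 y := by rw [hgeq]; rfl
    have key : max (f y - g y) 0 - max (g y - f y) 0 = f y - g y := by
      rcases le_total (f y) (g y) with h' | h'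
      · rw [max_eq_right (by linarith), max_eq_left (by linarith)]; ring
      · rw [max_eq_left (by linarith), max_eq_right (by linarith)]; ring
    have expand : ((u0 + (fun y => max (f y - g y) 0)) - (v0 + (fun y => max (g y - f y) 0))) y
        = (u0 y - v0 y) + (max (f y - g y) 0 - max (g y - f y) 0) := by
      simp only [Pi.sub_apply, Pi.add_apply]; ring
    rw [expand, key, ← hgy]; ring
end

section
/- Let K be a perfect metrizable Baire space and E any order dense sublattice of B(K) with C_b(K) ⊆ E ⊆ CD_ω(K). Then u(E) − u(E) = u(CD_ω(K)) − u(CD_ω(K)), i.e. E and CD_ω(K) have the same sequential monotone closure in B(K). -/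
/-!
Write `w` as the increasing limit of `f n ∈ CD_ω(K)` and let `g n` be continuous bounded
functions with `f n = g n` off a countable set `S`. In a perfect Baire T₁ space the complement
of a countable set is dense, so inequalities between the `f n` valid off `S` pass to the
continuous `g n` everywhere: the `g n` increase, are bounded above, and their supremum `G`
lies in `u(C_b(K)) ⊆ u(E)` and agrees with `w` off `S`. The bounded function `w - G` has
countable support; its positive and negative parts are increasing limits of finite suprema of
multiples of point indicators, and these lie in `E` by order density. Hence
`w = (G + (w - G)⁺) - (w - G)⁻ ∈ u(E) - u(E)`.
-/

open Filter

/-- The space CD_ω(K). -/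
def CDomega (K : Type*) [TopologicalSpace K] : Set (K → ℝ) :=
  {f | Bdd f ∧ ∃ g : K → ℝ, Continuous g ∧ Bdd g ∧ {x | f x ≠ g x}.Countable}

open Topology

section Bounded

variable {K : Type*} {f g : K → ℝ}

lemma Bdd.add (hf : Bdd f) (hg : Bdd g) : Bdd (f + g) := by
  obtain ⟨C, hC⟩ := hf
  obtain ⟨D, hD⟩ := hg
  exact ⟨C + D, fun x => (abs_add_le _ _).trans (add_le_add (hC x) (hD x))⟩

lemma Bdd.sub (hf : Bdd f) (hg : Bdd g) : Bdd (f - g) := by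
  obtain ⟨C, hC⟩ := hf
  obtain ⟨D, hD⟩ := hg
  exact ⟨C + D, fun x => (abs_sub _ _).trans (add_le_add (hC x) (hD x))⟩

lemma Bdd.of_abs_le (hg : Bdd g) (h : ∀ x, |f x| ≤ |g x|) : Bdd f := by
  obtain ⟨C, hC⟩ := hg
  exact ⟨C, fun x => (h x).trans (hC x)⟩

lemma Bdd.posPart (hf : Bdd f) : Bdd f⁺ :=
  hf.of_abs_le fun x => by
    rw [Pi.posPart_apply, abs_of_nonneg (posPart_nonneg _), ← posPart_add_negPart]
    exact le_add_of_nonneg_right (negPart_nonneg _)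

lemma Bdd.negPart (hf : Bdd f) : Bdd f⁻ :=
  hf.of_abs_le fun x => by
    rw [Pi.negPart_apply, abs_of_nonneg (negPart_nonneg _), ← posPart_add_negPart]
    exact le_add_of_nonneg_left (posPart_nonneg _)

end Bounded

namespace UpLim

variable {K : Type*} {E F : Set (K → ℝ)} {f g : K → ℝ}

lemma mono (hEF : E ⊆ F) (hf : UpLim E f) : UpLim F f := by
  obtain ⟨hb, u, hu, hmono, hlim⟩ := hf
  exact ⟨hb, u, fun n => hEF (hu n), hmono, hlim⟩

lemma add (hadd : ∀ f ∈ E, ∀ g ∈ E, f + g ∈ E) (hf : UpLim E f) (hg : UpLim E g) :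
    UpLim E (f + g) := by
  obtain ⟨hfb, u, hu, humono, hulim⟩ := hf
  obtain ⟨hgb, v, hv, hvmono, hvlim⟩ := hg
  exact ⟨hfb.add hgb, u + v, fun n => hadd _ (hu n) _ (hv n), humono.add hvmono,
    fun x => (hulim x).add (hvlim x)⟩

lemma of_eventually_eq {u : ℕ → K → ℝ} (hu : ∀ n, u n ∈ E) (hmono : Monotone u) (hf : Bdd f)
    (hev : ∀ x, ∀ᶠ n in atTop, u n x = f x) : UpLim E f :=
  ⟨hf, u, hu, hmono, fun x => tendsto_const_nhds.congr' ((hev x).mono fun _ h => h.symm)⟩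

lemma exists_of_monotone {u : ℕ → K → ℝ} (hu : ∀ n, u n ∈ E) (hmono : Monotone u)
    (hbdd : Bdd (u 0)) {C : ℝ} (hC : ∀ n x, u n x ≤ C) :
    ∃ f, UpLim E f ∧ ∀ x, Tendsto (fun n => u n x) atTop (𝓝 (f x)) := by
  obtain ⟨D, hD⟩ := hbdd
  have hbddAbove (x : K) : BddAbove (Set.range fun n => u n x) :=
    ⟨C, Set.forall_mem_range.2 fun n => hC n x⟩
  have hlim (x : K) : Tendsto (fun n => u n x) atTop (𝓝 (⨆ n, u n x)) :=
    tendsto_atTop_ciSup (fun _ _ h => hmono h x) (hbddAbove x)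
  refine ⟨fun x => ⨆ n, u n x, ⟨⟨max C D, fun x => abs_le.2 ⟨?_, ?_⟩⟩, u, hu, hmono, hlim⟩, hlim⟩
  · have := (abs_le.1 (hD x)).1
    linarith [le_ciSup (hbddAbove x) 0, le_max_right C D]
  · exact (ciSup_le fun n => hC n x).trans (le_max_left C D)

end UpLim

lemma Set.Countable.dense_compl_of_not_isOpen_singleton {X : Type*} [TopologicalSpace X]
    [T1Space X] [BaireSpace X] (hX : ∀ x : X, ¬ IsOpen ({x} : Set X)) {S : Set X}
    (hS : S.Countable) : Dense Sᶜ := by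
  rw [← Set.biUnion_of_singleton S, Set.compl_iUnion₂]
  exact dense_biInter_of_isOpen (fun x _ => isOpen_compl_singleton) hS
    fun x _ => dense_compl_singleton_iff_not_open.2 (hX x)

lemma Continuous.le_of_dense {X α : Type*} [TopologicalSpace X] [TopologicalSpace α]
    [LinearOrder α] [OrderClosedTopology α] {a b : X → α} (ha : Continuous a) (hb : Continuous b)
    {D : Set X} (hD : Dense D) (h : ∀ x ∈ D, a x ≤ b x) : a ≤ b := fun x =>
  le_on_closure h ha.continuousOn hb.continuousOn (hD.closure_eq ▸ Set.mem_univ x)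

section CountableSupport

variable {K : Type*} {E : Set (K → ℝ)}

lemma indicator_singleton_mem (hsm : ∀ (c : ℝ), ∀ f ∈ E, c • f ∈ E)
    (hdense : ∀ f : K → ℝ, Bdd f → 0 ≤ f → f ≠ 0 → ∃ g ∈ E, 0 ≤ g ∧ g ≠ 0 ∧ g ≤ f)
    (x : K) (f : K → ℝ) : ({x} : Set K).indicator f ∈ E := by
  obtain ⟨g, hgE, hg0, hgne, hgle⟩ := hdense (({x} : Set K).indicator 1)
    ⟨1, fun y => by by_cases hy : y = x <;> simp [hy]⟩
    (Set.indicator_nonneg fun _ _ => zero_le_one)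
    (by simp [funext_iff])
  have hg_off (y : K) (hy : y ≠ x) : g y = 0 :=
    le_antisymm (by simpa [hy] using hgle y) (hg0 y)
  have hgx : g x ≠ 0 := fun hgx => hgne <| funext fun y => by
    by_cases hy : y = x
    · rw [hy, hgx, Pi.zero_apply]
    · exact hg_off y hy
  convert hsm (f x / g x) g hgE using 1
  funext y
  by_cases hy : y = x
  · subst hy; simp [hgx]
  · simp [hy, hg_off y hy]

lemma indicator_insert_eq_sup {h : K → ℝ} (hh : 0 ≤ h) (a : K) (s : Set K) :
    (insert a s).indicator h = s.indicator h ⊔ ({a} : Set K).indicator h := by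
  funext y
  have hy : 0 ≤ h y := hh y
  by_cases hya : y = a
  · subst hya
    simpa using Set.indicator_le_self' (s := s) (fun x _ => hh x) y
  · by_cases hys : y ∈ s <;> simp [hya, hys, hy]

lemma indicator_mem_of_finite (h0 : (0 : K → ℝ) ∈ E) (hsup : ∀ f ∈ E, ∀ g ∈ E, f ⊔ g ∈ E)
    (hsingle : ∀ (x : K) (f : K → ℝ), ({x} : Set K).indicator f ∈ E)
    {h : K → ℝ} (hh : 0 ≤ h) {s : Set K} (hs : s.Finite) : s.indicator h ∈ E := by
  induction s, hs using Set.Finite.induction_on with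
  | empty => rwa [Set.indicator_empty']
  | @insert a s _ _ ih =>
    rw [indicator_insert_eq_sup hh]
    exact hsup _ ih _ (hsingle a h)

lemma UpLim.of_nonneg_of_countable_support (h0 : (0 : K → ℝ) ∈ E)
    (hsup : ∀ f ∈ E, ∀ g ∈ E, f ⊔ g ∈ E)
    (hsingle : ∀ (x : K) (f : K → ℝ), ({x} : Set K).indicator f ∈ E)
    {h : K → ℝ} (hb : Bdd h) (hh : 0 ≤ h) (hs : (Function.support h).Countable) :
    UpLim E h := by
  rcases (Function.support h).eq_empty_or_nonempty with hempty | hne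
  · rw [Function.support_eq_empty_iff.1 hempty] at hb ⊢
    exact .of_eventually_eq (fun _ => h0) monotone_const hb fun _ => .of_forall fun _ => rfl
  obtain ⟨e, he⟩ := hs.exists_eq_range hne
  refine .of_eventually_eq (u := fun n => (e '' Set.Iio n).indicator h)
    (fun n => indicator_mem_of_finite h0 hsup hsingle hh ((Set.finite_Iio n).image e))
    (fun m n hmn => Set.indicator_le_indicator_of_subset
      (Set.image_mono (Set.Iio_subset_Iio hmn)) hh) hb fun x => ?_
  by_cases hx : x ∈ Function.support h
  · obtain ⟨k, rfl⟩ : x ∈ Set.range e := he ▸ hx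
    filter_upwards [eventually_gt_atTop k] with n hn
    exact Set.indicator_of_mem (Set.mem_image_of_mem e (Set.mem_Iio.2 hn)) h
  · exact .of_forall fun n => Set.indicator_apply_eq_self.2 fun _ => Function.notMem_support.1 hx

lemma exists_uplim_sub_of_countable_support (h0 : (0 : K → ℝ) ∈ E)
    (hsup : ∀ f ∈ E, ∀ g ∈ E, f ⊔ g ∈ E)
    (hsingle : ∀ (x : K) (f : K → ℝ), ({x} : Set K).indicator f ∈ E)
    {d : K → ℝ} (hb : Bdd d) (hs : (Function.support d).Countable) :
    ∃ a b : K → ℝ, UpLim E a ∧ UpLim E b ∧ d = a - b :=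
  ⟨d⁺, d⁻, UpLim.of_nonneg_of_countable_support h0 hsup hsingle hb.posPart (posPart_nonneg d)
      (hs.mono (Function.support_comp_subset posPart_zero d)),
    UpLim.of_nonneg_of_countable_support h0 hsup hsingle hb.negPart (negPart_nonneg d)
      (hs.mono (Function.support_comp_subset negPart_zero d)),
    (posPart_sub_negPart d).symm⟩

end CountableSupport

lemma exists_uplim_continuous_eq_off_countable {K : Type*} [TopologicalSpace K] [T1Space K]
    [BaireSpace K] (hperfect : ∀ x : K, ¬ IsOpen ({x} : Set K)) {w : K → ℝ}
    (hw : UpLim (CDomega K) w) :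
    ∃ G, UpLim {g : K → ℝ | Continuous g ∧ Bdd g} G ∧ {x | w x ≠ G x}.Countable := by
  obtain ⟨⟨C, hC⟩, f, hf, hfmono, hflim⟩ := hw
  choose g hgc hgb hfg using fun n => (hf n).2
  set S := ⋃ n, {x | f n x ≠ g n x}
  have hS : S.Countable := Set.countable_iUnion hfg
  have hfg_off (x : K) (hx : x ∉ S) (n : ℕ) : f n x = g n x := by
    by_contra h
    exact hx (Set.mem_iUnion.2 ⟨n, h⟩)
  have hdense := hS.dense_compl_of_not_isOpen_singleton hperfect
  have hgmono : Monotone g := fun m n hmn =>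
    (hgc m).le_of_dense (hgc n) hdense fun x hx => by
      rw [← hfg_off x hx, ← hfg_off x hx]
      exact hfmono hmn x
  have hfw (n : ℕ) (x : K) : f n x ≤ w x :=
    Monotone.ge_of_tendsto (fun _ _ h => hfmono h x) (hflim x) n
  have hgC (n : ℕ) : g n ≤ fun _ => C :=
    (hgc n).le_of_dense continuous_const hdense fun x hx => by
      rw [← hfg_off x hx]
      exact ((hfw n x).trans (le_abs_self _)).trans (hC x)
  obtain ⟨G, hG, hglim⟩ := UpLim.exists_of_monotone (E := {g : K → ℝ | Continuous g ∧ Bdd g})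
    (fun n => ⟨hgc n, hgb n⟩) hgmono (hgb 0) fun n x => hgC n x
  refine ⟨G, hG, hS.mono fun x hx => ?_⟩
  by_contra hxS
  exact hx (tendsto_nhds_unique (hflim x) ((hglim x).congr fun n => (hfg_off x hxS n).symm))

lemma exists_uplim_sub_of_uplim_cdomega {K : Type*} [TopologicalSpace K] [T1Space K]
    [BaireSpace K] (hperfect : ∀ x : K, ¬ IsOpen ({x} : Set K)) {E : Set (K → ℝ)}
    (hadd : ∀ f ∈ E, ∀ g ∈ E, f + g ∈ E)
    (hsm : ∀ (c : ℝ), ∀ f ∈ E, c • f ∈ E)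
    (hsup : ∀ f ∈ E, ∀ g ∈ E, f ⊔ g ∈ E)
    (hdense : ∀ f : K → ℝ, Bdd f → 0 ≤ f → f ≠ 0 → ∃ g ∈ E, 0 ≤ g ∧ g ≠ 0 ∧ g ≤ f)
    (hCb : {g : K → ℝ | Continuous g ∧ Bdd g} ⊆ E) {w : K → ℝ} (hw : UpLim (CDomega K) w) :
    ∃ a b : K → ℝ, UpLim E a ∧ UpLim E b ∧ w = a - b := by
  obtain ⟨G, hG, hwG⟩ := exists_uplim_continuous_eq_off_countable hperfect hw
  have h0 : (0 : K → ℝ) ∈ E := hCb ⟨continuous_const, 0, fun _ => by simp⟩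
  obtain ⟨a, b, ha, hb, hab⟩ := exists_uplim_sub_of_countable_support h0 hsup
    (indicator_singleton_mem hsm hdense) (hw.1.sub hG.1)
    (hwG.mono fun _ => sub_ne_zero.1)
  refine ⟨G + a, b, (hG.mono hCb).add hadd ha, hb, ?_⟩
  rw [add_sub_assoc, ← hab, add_sub_cancel]

/-- Let K be a perfect metrizable Baire space and E any order dense
sublattice of B(K) with C_b(K) ⊆ E ⊆ CD_ω(K). Then u(E) − u(E) =
u(CD_ω(K)) − u(CD_ω(K)). -/
theorem stmt11 {K : Type*} [TopologicalSpace K] [TopologicalSpace.MetrizableSpace K]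
    [BaireSpace K] (hperfect : ∀ x : K, ¬ IsOpen ({x} : Set K))
    (E : Set (K → ℝ))
    (hadd : ∀ f ∈ E, ∀ g ∈ E, f + g ∈ E)
    (hsm : ∀ (c : ℝ), ∀ f ∈ E, c • f ∈ E)
    (hsupcl : ∀ f ∈ E, ∀ g ∈ E, f ⊔ g ∈ E)
    (hdense : ∀ f : K → ℝ, Bdd f → 0 ≤ f → f ≠ 0 → ∃ g ∈ E, 0 ≤ g ∧ g ≠ 0 ∧ g ≤ f)
    (hCb : {g : K → ℝ | Continuous g ∧ Bdd g} ⊆ E)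
    (hE : E ⊆ CDomega K) :
    {f : K → ℝ | Bdd f ∧ ∃ u v : K → ℝ, UpLim E u ∧ UpLim E v ∧ f = u - v} =
      {f : K → ℝ | Bdd f ∧ ∃ u v : K → ℝ, UpLim (CDomega K) u ∧ UpLim (CDomega K) v ∧
        f = u - v} := by
  ext f
  refine ⟨fun ⟨hf, u, v, hu, hv, huv⟩ => ⟨hf, u, v, hu.mono hE, hv.mono hE, huv⟩, ?_⟩
  rintro ⟨hf, u, v, hu, hv, rfl⟩
  obtain ⟨a, b, ha, hb, rfl⟩ :=
    exists_uplim_sub_of_uplim_cdomega hperfect hadd hsm hsupcl hdense hCb hu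
  obtain ⟨c, d, hc, hd, rfl⟩ :=
    exists_uplim_sub_of_uplim_cdomega hperfect hadd hsm hsupcl hdense hCb hv
  exact ⟨hf, a + d, b + c, ha.add hadd hd, hb.add hadd hc, by abel⟩
end

section
/- Let E be an almost σ-order complete Archimedean vector lattice. Then its sequential monotone closure E^{σm} = u(E) − u(E) (computed in an order completion of E) is σ-order complete. -/
/-!
Write `u(E)` for the σ-upper elements, the suprema in `Eδ` of increasing sequences from `E`.
`u(E)` is closed under `+`, `⊔` and, by a diagonal argument, under countable suprema. The crux is
that `q ≤ p` in `u(E)` forces `p - q ∈ u(E)`. Write `p = sup i(uₙ)`, `q = sup i(vₘ)`; in the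
σ-order complete `X` take `xₘ = sup (uₙ - vₘ)⁺` and `y = inf xₘ`. Since `E` is order dense both
in `Eδ` and in `X`, an element of `E` lies below `p - i(vₘ)` in `Eδ` iff it lies below `xₘ` in
`X`, hence below `p - q` iff below `y`. Super order density writes `y = sup j(wₖ)`, and then
`i(wₖ) ↑ p - q`.

So comparable elements of `u(E) - u(E)` differ by an element of `u(E)`. If `cₙ ∈ u(E) - u(E)` has
supremum `s`, the partial suprema `eₙ` stay in `u(E) - u(E)` and `eₙ - e₀ ∈ u(E)`, whence
`s - e₀ ∈ u(E)` and `s ∈ u(E) - u(E)`.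
-/

open Set Function

section LatticeGroup

variable {ι α : Type*}

theorem IsLUB.range_sup [SemilatticeSup α] {g h : ι → α} {s t : α}
    (hg : IsLUB (range g) s) (hh : IsLUB (range h) t) :
    IsLUB (range fun n => g n ⊔ h n) (s ⊔ t) := by
  refine (isLUB_congr ?_).2 (hg.union hh)
  ext b
  simp [mem_upperBounds, forall_and]

theorem IsLUB.range_unpair [Preorder α] {x : ℕ → α} {u : ℕ → ℕ → α} {s : α}
    (hs : IsLUB (range x) s) (hu : ∀ k, IsLUB (range (u k)) (x k)) :
    IsLUB (range fun n : ℕ => u n.unpair.1 n.unpair.2) s := by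
  have hrange : range (fun n : ℕ => u n.unpair.1 n.unpair.2) = ⋃ k, range (u k) := by
    ext b
    simp only [mem_range, mem_iUnion]
    exact ⟨fun ⟨n, hn⟩ => ⟨_, _, hn⟩, fun ⟨k, m, hkm⟩ => ⟨Nat.pair k m, by simpa using hkm⟩⟩
  rw [hrange, ← isLUB_iUnion_iff_of_isLUB hu]
  exact hs

theorem CountableSupClosed.of_isLUB_range [LE α] {S : Set α}
    (hS : ∀ f : ℕ → α, (∀ n, f n ∈ S) → ∀ s, IsLUB (range f) s → s ∈ S) :
    CountableSupClosed S where
  isLUB_mem C hCS hCne hCc s hs := by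
    obtain ⟨f, rfl⟩ := hCc.exists_eq_range hCne
    exact hS f (fun n => hCS (mem_range_self n)) s hs

section OrderedGroup

variable [Preorder α] [AddCommGroup α] [AddLeftMono α] {g h : ι → α} {s t : α}

theorem IsLUB.range_add_const (hg : IsLUB (range g) s) (c : α) :
    IsLUB (range fun n => g n + c) (s + c) := by
  simpa [← range_comp, comp_def] using (OrderIso.addRight c).isLUB_image'.2 hg

theorem IsLUB.range_add_of_monotone [SemilatticeSup ι] (hg' : Monotone g) (hh' : Monotone h)
    (hg : IsLUB (range g) s) (hh : IsLUB (range h) t) :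
    IsLUB (range fun n => g n + h n) (s + t) := by
  refine ⟨forall_mem_range.2 fun n =>
    add_le_add (hg.1 (mem_range_self n)) (hh.1 (mem_range_self n)), fun b hb => ?_⟩
  have hgh : ∀ m n, g m + h n ≤ b := fun m n =>
    (add_le_add (hg' le_sup_left) (hh' le_sup_right)).trans (hb (mem_range_self (m ⊔ n)))
  have hsh : ∀ n, h n + s ≤ b := fun n => by
    rw [add_comm]
    exact (hg.range_add_const (h n)).2 (forall_mem_range.2 fun m => hgh m n)
  rw [add_comm]
  exact (hh.range_add_const s).2 (forall_mem_range.2 hsh)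

end OrderedGroup

variable [Lattice α] [AddCommGroup α] [AddLeftMono α] {g : ι → α} {s : α}

theorem IsLUB.range_inf_const (hg : IsLUB (range g) s) (c : α) :
    IsLUB (range fun n => g n ⊓ c) (s ⊓ c) := by
  refine ⟨forall_mem_range.2 fun n => inf_le_inf_right c (hg.1 (mem_range_self n)),
    fun t ht => ?_⟩
  have hgt : ∀ n, g n ≤ t + (s - s ⊓ c) := fun n => by
    have hgc : g n - (s - s ⊓ c) ≤ g n ⊓ c := by
      refine le_inf (sub_le_self _ (sub_nonneg.2 inf_le_left)) ?_
      calc g n - (s - s ⊓ c) = s ⊓ c - (s - g n) := by abel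
        _ ≤ c := (sub_le_self _ (sub_nonneg.2 (hg.1 (mem_range_self n)))).trans inf_le_right
    exact sub_le_iff_le_add.1 (hgc.trans (ht (mem_range_self n)))
  simpa only [sub_sub_cancel] using sub_le_iff_le_add.2 (hg.2 (forall_mem_range.2 hgt))

theorem IsLUB.range_sub_sup_zero [Nonempty ι] (hg : IsLUB (range g) s) {c : α} (hc : c ≤ s) :
    IsLUB (range fun n => (g n - c) ⊔ 0) (s - c) := by
  have h0 : IsLUB (range fun _ : ι => (0 : α)) 0 := by simp
  simpa [← sub_eq_add_neg, sup_eq_left.2 (sub_nonneg.2 hc)] using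
    (hg.range_add_const (-c)).range_sup h0

end LatticeGroup

structure IsLatticeAddEmbedding {E F : Type*} [Lattice E] [Add E] [Lattice F] [Add F]
    (i : E → F) : Prop where
  injective : Injective i
  map_add : ∀ a b, i (a + b) = i a + i b
  map_sup : ∀ a b, i (a ⊔ b) = i a ⊔ i b

namespace IsLatticeAddEmbedding

variable {E F : Type*} [Lattice E] [AddCommGroup E] [Lattice F] [AddCommGroup F] {i : E → F}

theorem map_zero (hi : IsLatticeAddEmbedding i) : i 0 = 0 :=
  (AddMonoidHom.mk' i hi.map_add).map_zero

theorem map_sub (hi : IsLatticeAddEmbedding i) (a b : E) : i (a - b) = i a - i b :=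
  (AddMonoidHom.mk' i hi.map_add).map_sub a b

theorem le_iff (hi : IsLatticeAddEmbedding i) {a b : E} : i a ≤ i b ↔ a ≤ b := by
  rw [← sup_eq_right, ← hi.map_sup, hi.injective.eq_iff, sup_eq_right]

theorem monotone (hi : IsLatticeAddEmbedding i) : Monotone i := fun _ _ => hi.le_iff.2

theorem nonpos_iff (hi : IsLatticeAddEmbedding i) {a : E} : i a ≤ 0 ↔ a ≤ 0 := by
  rw [← hi.map_zero, hi.le_iff]

theorem map_inf [AddLeftMono E] [AddLeftMono F] (hi : IsLatticeAddEmbedding i) (a b : E) :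
    i (a ⊓ b) = i a ⊓ i b := by
  rw [eq_sub_of_add_eq (inf_add_sup a b), eq_sub_of_add_eq (inf_add_sup (i a) (i b)), hi.map_sub,
    hi.map_add, hi.map_sup]

end IsLatticeAddEmbedding

section Density

variable {E F X : Type*}

def IsOrderDense [Zero F] [Preorder F] (i : E → F) : Prop :=
  ∀ z : F, 0 < z → ∃ a : E, 0 < i a ∧ i a ≤ z

def IsSuperOrderDense [Zero E] [Preorder E] [Zero X] [Preorder X] (j : E → X) : Prop :=
  ∀ x : X, 0 ≤ x → ∃ u : ℕ → E, (∀ n, 0 ≤ u n) ∧ Monotone (fun n => j (u n)) ∧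
    IsLUB (range fun n => j (u n)) x

def IsSigmaOrderComplete (X : Type*) [Preorder X] : Prop :=
  ∀ C : Set X, C.Countable → C.Nonempty → BddAbove C → ∃ s, IsLUB C s

theorem IsSigmaOrderComplete.exists_isGLB_range [Preorder X] [AddCommGroup X] [AddLeftMono X]
    (hX : IsSigmaOrderComplete X) {x : ℕ → X} (hx : BddBelow (range x)) :
    ∃ y, IsGLB (range x) y := by
  obtain ⟨s, hs⟩ := hX (-range x) (by simpa [← image_neg_eq_neg] using (countable_range x).image _)
    (range_nonempty x).neg hx.neg
  exact ⟨-s, isLUB_neg.1 hs⟩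

theorem IsOrderDense.exists_pos_inf_add_le [Lattice F] [AddCommGroup F] [AddLeftMono F]
    {i : E → F} (hdense : IsOrderDense i) {z t : F} (h : ¬ z ≤ t) :
    ∃ a, 0 < i a ∧ z ⊓ t + i a ≤ z := by
  obtain ⟨a, ha, haz⟩ := hdense (z - z ⊓ t) (sub_pos.2 (inf_lt_left.2 h))
  exact ⟨a, ha, le_sub_iff_add_le'.1 haz⟩

variable [Lattice E] [AddCommGroup E] [Lattice X] [AddCommGroup X] {j : E → X}

theorem IsSuperOrderDense.isOrderDense (hsuper : IsSuperOrderDense j)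
    (hj : IsLatticeAddEmbedding j) : IsOrderDense j := by
  intro z hz
  obtain ⟨u, hu0, -, hu⟩ := hsuper z hz.le
  obtain ⟨n, hn⟩ : ∃ n, ¬ j (u n) ≤ 0 := by
    by_contra! h
    exact hz.not_ge (hu.2 (forall_mem_range.2 h))
  exact ⟨u n, lt_of_le_not_ge (hj.map_zero ▸ hj.monotone (hu0 n)) hn, hu.1 (mem_range_self n)⟩

variable [AddLeftMono X] [Lattice F] [AddCommGroup F] [AddLeftMono F] {i : E → F}

theorem IsOrderDense.isLUB_of_le_iff {ι : Type*} (hdense : IsOrderDense i)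
    (hi : IsLatticeAddEmbedding i) (hj : IsLatticeAddEmbedding j) {w : ι → E} {z : F} {y : X}
    (hzy : ∀ a, i a ≤ z ↔ j a ≤ y) (hy : IsLUB (range fun n => j (w n)) y) :
    IsLUB (range fun n => i (w n)) z := by
  refine ⟨forall_mem_range.2 fun n => (hzy _).2 (hy.1 (mem_range_self n)), fun t ht => ?_⟩
  by_contra h
  obtain ⟨a, ha, hle⟩ := hdense.exists_pos_inf_add_le h
  have hwa : ∀ n, j (w n) + j a ≤ y := fun n => by
    rw [← hj.map_add, ← hzy, hi.map_add]
    exact (add_le_add_left (le_inf ((hzy _).2 (hy.1 (mem_range_self n)))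
      (ht (mem_range_self n))) _).trans hle
  have hya : y + j a ≤ y := (hy.range_add_const (j a)).2 (forall_mem_range.2 hwa)
  rw [add_le_iff_nonpos_right, hj.nonpos_iff] at hya
  exact ha.not_ge (hi.nonpos_iff.2 hya)

variable [AddLeftMono E]

/-- If `i w ≰ s`, density yields `0 < a` with `cₙ ⊓ w + a ≤ w` for all `n`; taking suprema in `X`,
where `⊓ w` and `+ a` commute with suprema, gives `w + a ≤ w`. -/
theorem IsOrderDense.le_of_isLUB_of_le {ι : Type*} (hdense : IsOrderDense i)
    (hi : IsLatticeAddEmbedding i) (hj : IsLatticeAddEmbedding j) {c : ι → E} {w : E} {s : F}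
    {t : X} (hs : IsLUB (range fun n => i (c n)) s) (ht : IsLUB (range fun n => j (c n)) t)
    (hw : j w ≤ t) : i w ≤ s := by
  by_contra h
  obtain ⟨a, ha, hle⟩ := hdense.exists_pos_inf_add_le h
  have hE : ∀ n, c n ⊓ w + a ≤ w := fun n => by
    rw [← hi.le_iff, hi.map_add, hi.map_inf, inf_comm]
    exact (add_le_add_left (inf_le_inf_left _ (hs.1 (mem_range_self n))) _).trans hle
  have htw : t ⊓ j w + j a ≤ j w := by
    refine ((ht.range_inf_const (j w)).range_add_const (j a)).2 (forall_mem_range.2 fun n => ?_)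
    rw [← hj.map_inf, ← hj.map_add]
    exact hj.monotone (hE n)
  rw [inf_eq_right.2 hw, add_le_iff_nonpos_right, hj.nonpos_iff] at htw
  exact ha.not_ge (hi.nonpos_iff.2 htw)

end Density

section SigmaUpper

variable {E F X : Type*}

def sigmaUpper [Preorder F] (i : E → F) : Set F :=
  {x | ∃ u : ℕ → E, Monotone (fun n => i (u n)) ∧ IsLUB (range fun n => i (u n)) x}

def sigmaMonotoneClosure [Preorder F] [Sub F] (i : E → F) : Set F :=
  {x | ∃ a ∈ sigmaUpper i, ∃ b ∈ sigmaUpper i, x = a - b}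

theorem add_mem_sigmaUpper [Add E] [Preorder F] [AddCommGroup F] [AddLeftMono F] {i : E → F}
    (hadd : ∀ a b, i (a + b) = i a + i b) {x y : F} (hx : x ∈ sigmaUpper i)
    (hy : y ∈ sigmaUpper i) : x + y ∈ sigmaUpper i := by
  obtain ⟨u, hu_mono, hu⟩ := hx
  obtain ⟨v, hv_mono, hv⟩ := hy
  refine ⟨fun n => u n + v n, ?_⟩
  simp only [hadd]
  exact ⟨hu_mono.add hv_mono, hu.range_add_of_monotone hu_mono hv_mono hv⟩

theorem supClosed_sigmaUpper [Max E] [SemilatticeSup F] {i : E → F}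
    (hsup : ∀ a b, i (a ⊔ b) = i a ⊔ i b) : SupClosed (sigmaUpper i) := by
  rintro x ⟨u, hu_mono, hu⟩ y ⟨v, hv_mono, hv⟩
  refine ⟨fun n => u n ⊔ v n, ?_⟩
  simp only [hsup]
  exact ⟨hu_mono.sup hv_mono, hu.range_sup hv⟩

theorem isLUB_mem_sigmaUpper [SemilatticeSup E] [SemilatticeSup F] {i : E → F}
    (hsup : ∀ a b, i (a ⊔ b) = i a ⊔ i b) {x : ℕ → F} (hx : ∀ n, x n ∈ sigmaUpper i) {s : F}
    (hs : IsLUB (range x) s) : s ∈ sigmaUpper i := by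
  choose u _ hu using hx
  have hmap : ∀ (f : ℕ → E) n, i (partialSups f n) = partialSups (fun n => i (f n)) n :=
    fun f n => (map_partialSups (⟨i, hsup⟩ : SupHom E F) f n).symm
  refine ⟨partialSups fun n : ℕ => u n.unpair.1 n.unpair.2, ?_⟩
  simp only [hmap]
  refine ⟨(partialSups _).monotone, ?_⟩
  rw [isLUB_congr (upperBounds_range_partialSups _)]
  exact hs.range_unpair hu

theorem sub_mem_sigmaUpper [Lattice E] [AddCommGroup E] [AddLeftMono E]
    [Lattice F] [AddCommGroup F] [AddLeftMono F] [Lattice X] [AddCommGroup X] [AddLeftMono X]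
    {i : E → F} {j : E → X} (hi : IsLatticeAddEmbedding i) (hdense : IsOrderDense i)
    (hmaj : ∀ x : F, ∃ a, x ≤ i a) (hj : IsLatticeAddEmbedding j) (hX : IsSigmaOrderComplete X)
    (hsuper : IsSuperOrderDense j) {p q : F} (hp : p ∈ sigmaUpper i) (hq : q ∈ sigmaUpper i)
    (hqp : q ≤ p) : p - q ∈ sigmaUpper i := by
  obtain ⟨u, -, hu⟩ := hp
  obtain ⟨v, -, hv⟩ := hq
  have hiuv : ∀ m, IsLUB (range fun n => i ((u n - v m) ⊔ 0)) (p - i (v m)) := fun m => by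
    simpa only [hi.map_sup, hi.map_sub, hi.map_zero] using
      hu.range_sub_sup_zero ((hv.1 (mem_range_self m)).trans hqp)
  obtain ⟨e, he⟩ := hmaj p
  have hjuv : ∀ m, ∃ x, IsLUB (range fun n => j ((u n - v m) ⊔ 0)) x := fun m =>
    hX _ (countable_range _) (range_nonempty _) ⟨j ((e - v m) ⊔ 0), forall_mem_range.2 fun n =>
      hj.monotone (sup_le_sup_right (sub_le_sub_right
        (hi.le_iff.1 ((hu.1 (mem_range_self n)).trans he)) _) _)⟩
  choose x hx using hjuv
  have hx0 : 0 ∈ lowerBounds (range x) := forall_mem_range.2 fun m =>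
    hj.map_zero ▸ (hj.monotone le_sup_right).trans ((hx m).1 (mem_range_self 0))
  obtain ⟨y, hy⟩ := hX.exists_isGLB_range ⟨0, hx0⟩
  obtain ⟨w, -, hw_mono, hw⟩ := hsuper y (hy.2 hx0)
  have hiff : ∀ a, i a ≤ p - q ↔ j a ≤ y := fun a =>
    calc i a ≤ p - q ↔ ∀ m, i (v m) ≤ p - i a := by
          rw [le_sub_comm, isLUB_le_iff hv, mem_upperBounds, forall_mem_range]
      _ ↔ ∀ m, j a ≤ x m := forall_congr' fun m => by
          rw [le_sub_comm]
          exact ⟨(hsuper.isOrderDense hj).le_of_isLUB_of_le hj hi (hx m) (hiuv m),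
            hdense.le_of_isLUB_of_le hi hj (hiuv m) (hx m)⟩
      _ ↔ j a ≤ y := by rw [le_isGLB_iff hy, mem_lowerBounds, forall_mem_range]
  exact ⟨w, fun _ _ h => hi.monotone (hj.le_iff.1 (hw_mono h)),
    hdense.isLUB_of_le_iff hi hj hiff hw⟩

end SigmaUpper

section MonotoneClosure

variable {E F : Type*} [Add E] [Lattice F] [AddCommGroup F] [AddLeftMono F] {i : E → F}

theorem supClosed_sigmaMonotoneClosure [Max E] (hadd : ∀ a b, i (a + b) = i a + i b)
    (hsup : ∀ a b, i (a ⊔ b) = i a ⊔ i b) : SupClosed (sigmaMonotoneClosure i) := by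
  rintro _ ⟨a, ha, b, hb, rfl⟩ _ ⟨a', ha', b', hb', rfl⟩
  refine ⟨(a + b') ⊔ (a' + b), supClosed_sigmaUpper hsup (add_mem_sigmaUpper hadd ha hb')
    (add_mem_sigmaUpper hadd ha' hb), b + b', add_mem_sigmaUpper hadd hb hb', ?_⟩
  rw [sup_sub]
  congr 1 <;> abel

theorem sub_mem_sigmaUpper_of_mem_sigmaMonotoneClosure
    (hsub : ∀ p ∈ sigmaUpper i, ∀ q ∈ sigmaUpper i, q ≤ p → p - q ∈ sigmaUpper i)
    (hadd : ∀ a b, i (a + b) = i a + i b) {z z' : F} (hz : z ∈ sigmaMonotoneClosure i)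
    (hz' : z' ∈ sigmaMonotoneClosure i) (hle : z' ≤ z) : z - z' ∈ sigmaUpper i := by
  obtain ⟨a, ha, b, hb, rfl⟩ := hz
  obtain ⟨a', ha', b', hb', rfl⟩ := hz'
  rw [show a - b - (a' - b') = a + b' - (b + a') by abel]
  exact hsub _ (add_mem_sigmaUpper hadd ha hb') _ (add_mem_sigmaUpper hadd hb ha')
    (add_comm a' b ▸ sub_le_sub_iff.1 hle)

theorem isLUB_mem_sigmaMonotoneClosure [SemilatticeSup E]
    (hsub : ∀ p ∈ sigmaUpper i, ∀ q ∈ sigmaUpper i, q ≤ p → p - q ∈ sigmaUpper i)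
    (hadd : ∀ a b, i (a + b) = i a + i b) (hsup : ∀ a b, i (a ⊔ b) = i a ⊔ i b) {f : ℕ → F}
    (hf : ∀ n, f n ∈ sigmaMonotoneClosure i) {s : F} (hs : IsLUB (range f) s) :
    s ∈ sigmaMonotoneClosure i := by
  set e := partialSups f
  have he : ∀ n, e n ∈ sigmaMonotoneClosure i := fun n =>
    (supClosed_sigmaMonotoneClosure hadd hsup).finsetSup'_mem Finset.nonempty_Iic fun k _ => hf k
  have hes : IsLUB (range fun n => e n - e 0) (s - e 0) := by
    simpa only [sub_eq_add_neg] using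
      ((isLUB_congr (upperBounds_range_partialSups f)).2 hs).range_add_const (-e 0)
  have hse : s - e 0 ∈ sigmaUpper i := isLUB_mem_sigmaUpper hsup (fun n =>
    sub_mem_sigmaUpper_of_mem_sigmaMonotoneClosure hsub hadd (he n) (he 0)
      (e.monotone (Nat.zero_le n))) hes
  obtain ⟨a, ha, b, hb, he0⟩ := he 0
  exact ⟨s - e 0 + a, add_mem_sigmaUpper hadd hse ha, b, hb,
    by rw [add_sub_assoc, ← he0, sub_add_cancel]⟩

theorem countableSupClosed_sigmaMonotoneClosure [SemilatticeSup E]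
    (hsub : ∀ p ∈ sigmaUpper i, ∀ q ∈ sigmaUpper i, q ≤ p → p - q ∈ sigmaUpper i)
    (hadd : ∀ a b, i (a + b) = i a + i b) (hsup : ∀ a b, i (a ⊔ b) = i a ⊔ i b) :
    CountableSupClosed (sigmaMonotoneClosure i) :=
  .of_isLUB_range fun _ hf _ hs => isLUB_mem_sigmaMonotoneClosure hsub hadd hsup hf hs

end MonotoneClosure

theorem stmt16_general {E Eδ : Type*}
    [Lattice E] [AddCommGroup E] [Module ℝ E] [CovariantClass E E (· + ·) (· ≤ ·)]
    [Lattice Eδ] [AddCommGroup Eδ] [CovariantClass Eδ Eδ (· + ·) (· ≤ ·)]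
    -- E is almost σ-order complete: it embeds as a super order dense sublattice of a
    -- σ-order complete vector lattice X
    (halmost : ∃ (X : Type) (_ : Lattice X) (_ : AddCommGroup X) (_ : Module ℝ X)
        (_ : CovariantClass X X (· + ·) (· ≤ ·)) (j : E → X),
        Function.Injective j ∧
        (∀ a b : E, j (a + b) = j a + j b) ∧
        (∀ (c : ℝ) (a : E), j (c • a) = c • j a) ∧
        (∀ a b : E, j (a ⊔ b) = j a ⊔ j b) ∧
        -- X is σ-order complete
        (∀ C : Set X, C.Countable → C.Nonempty → BddAbove C → ∃ s, IsLUB C s) ∧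
        -- j E is super order dense in X
        (∀ x : X, 0 ≤ x → ∃ u : ℕ → E, (∀ n, 0 ≤ u n) ∧ Monotone (fun n => j (u n)) ∧
          IsLUB (Set.range fun n => j (u n)) x))
    -- i : E → Eδ realizes Eδ as an order completion of E
    (i : E → Eδ)
    (hiinj : Function.Injective i)
    (hiadd : ∀ a b : E, i (a + b) = i a + i b)
    (hisup : ∀ a b : E, i (a ⊔ b) = i a ⊔ i b)
    (hcomp : ∀ C : Set Eδ, C.Nonempty → BddAbove C → ∃ b, IsLUB C b)
    (hdense : ∀ x : Eδ, 0 < x → ∃ a : E, 0 < i a ∧ i a ≤ x)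
    (hmaj : ∀ x : Eδ, ∃ a : E, x ≤ i a)
    -- the sequential monotone closure S = u(E) − u(E) in Eδ
    (uE S : Set Eδ)
    (huE : uE = {x : Eδ | ∃ u : ℕ → E, Monotone (fun n => i (u n)) ∧
      IsLUB (Set.range fun n => i (u n)) x})
    (hSdef : S = {x : Eδ | ∃ a ∈ uE, ∃ b ∈ uE, x = a - b}) :
    -- S is σ-order complete
    ∀ C : Set Eδ, C ⊆ S → C.Countable → C.Nonempty → (∃ b ∈ S, ∀ c ∈ C, c ≤ b) →
      ∃ s ∈ S, IsLUB C s := by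
  rintro C hCS hCc hCne ⟨b, -, hb⟩
  obtain ⟨X, _, _, _, _, j, hjinj, hjadd, -, hjsup, hX, hsuper⟩ := halmost
  have hi : IsLatticeAddEmbedding i := ⟨hiinj, hiadd, hisup⟩
  have hj : IsLatticeAddEmbedding j := ⟨hjinj, hjadd, hjsup⟩
  have hsub : ∀ p ∈ sigmaUpper i, ∀ q ∈ sigmaUpper i, q ≤ p → p - q ∈ sigmaUpper i :=
    fun _ hp _ hq hqp => sub_mem_sigmaUpper hi hdense hmaj hj hX hsuper hp hq hqp
  obtain ⟨s, hs⟩ := hcomp C hCne ⟨b, hb⟩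
  subst huE hSdef
  exact ⟨s, (countableSupClosed_sigmaMonotoneClosure hsub hiadd hisup).isLUB_mem C hCS hCne hCc
    s hs, hs⟩

/-- Let E be an almost σ-order complete Archimedean vector lattice. Then
its sequential monotone closure E^{σm} = u(E) − u(E), computed in an order completion
E^δ of E, is σ-order complete. -/
theorem stmt16 {E Eδ : Type*}
    [Lattice E] [AddCommGroup E] [Module ℝ E] [CovariantClass E E (· + ·) (· ≤ ·)]
    [Lattice Eδ] [AddCommGroup Eδ] [Module ℝ Eδ] [CovariantClass Eδ Eδ (· + ·) (· ≤ ·)]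
    -- E is Archimedean
    (harch : ∀ x y : E, (∀ n : ℕ, n • x ≤ y) → x ≤ 0)
    -- E is almost σ-order complete: it embeds as a super order dense sublattice of a
    -- σ-order complete vector lattice X
    (halmost : ∃ (X : Type) (_ : Lattice X) (_ : AddCommGroup X) (_ : Module ℝ X)
        (_ : CovariantClass X X (· + ·) (· ≤ ·)) (j : E → X),
        Function.Injective j ∧
        (∀ a b : E, j (a + b) = j a + j b) ∧
        (∀ (c : ℝ) (a : E), j (c • a) = c • j a) ∧
        (∀ a b : E, j (a ⊔ b) = j a ⊔ j b) ∧
        -- X is σ-order complete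
        (∀ C : Set X, C.Countable → C.Nonempty → BddAbove C → ∃ s, IsLUB C s) ∧
        -- j E is super order dense in X
        (∀ x : X, 0 ≤ x → ∃ u : ℕ → E, (∀ n, 0 ≤ u n) ∧ Monotone (fun n => j (u n)) ∧
          IsLUB (Set.range fun n => j (u n)) x))
    -- i : E → Eδ realizes Eδ as an order completion of E
    (i : E → Eδ)
    (hiinj : Function.Injective i)
    (hiadd : ∀ a b : E, i (a + b) = i a + i b)
    (hism : ∀ (c : ℝ) (a : E), i (c • a) = c • i a)
    (hisup : ∀ a b : E, i (a ⊔ b) = i a ⊔ i b)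
    (hcomp : ∀ C : Set Eδ, C.Nonempty → BddAbove C → ∃ b, IsLUB C b)
    (hdense : ∀ x : Eδ, 0 < x → ∃ a : E, 0 < i a ∧ i a ≤ x)
    (hmaj : ∀ x : Eδ, ∃ a : E, x ≤ i a)
    -- the sequential monotone closure S = u(E) − u(E) in Eδ
    (uE S : Set Eδ)
    (huE : uE = {x : Eδ | ∃ u : ℕ → E, Monotone (fun n => i (u n)) ∧
      IsLUB (Set.range fun n => i (u n)) x})
    (hSdef : S = {x : Eδ | ∃ a ∈ uE, ∃ b ∈ uE, x = a - b}) :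
    -- S is σ-order complete
    ∀ C : Set Eδ, C ⊆ S → C.Countable → C.Nonempty → (∃ b ∈ S, ∀ c ∈ C, c ≤ b) →
      ∃ s ∈ S, IsLUB C s :=
  stmt16_general halmost i hiinj hiadd hisup hcomp hdense hmaj uE S huE hSdef
end
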